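/- arXiv:1305.1117 — 4 statements merged into one kernel-verified Lean document; each statement's English description precedes it below -/
import Mathlib

section
/- In the polynomial ring ℚ[t₁,t₂,t₃,t₄], the identity e₄(t) + e₄(ρt) + e₄(ρ²t) = 0 holds, where e₄ denotes the fourth elementary symmetric polynomial, e₄(ρt) = (ρt₁)(ρt₂)(ρt₃)(ρt₄), and ρ acts as the substitution tᵢ ↦ -γ + tᵢ (i=1,2,3), t₄ ↦ γ - t₄ with γ = (t₁+t₂+t₃+t₄)/2. -/
open MvPolynomial

/-- γ = (t₁+t₂+t₃+t₄)/2 in ℚ[t₁,t₂,t₃,t₄]. -/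
noncomputable def gam : MvPolynomial (Fin 4) ℚ := C (1/2 : ℚ) * (X 0 + X 1 + X 2 + X 3)

/-- ρt₁ = -γ+t₁, ρt₂ = -γ+t₂, ρt₃ = -γ+t₃, ρt₄ = γ-t₄. -/
noncomputable def rt : Fin 4 → MvPolynomial (Fin 4) ℚ :=
  ![-gam + X 0, -gam + X 1, -gam + X 2, gam - X 3]

/-- ρ²tᵢ: the substitution tⱼ ↦ ρtⱼ applied to ρtᵢ. -/
noncomputable def r2t (i : Fin 4) : MvPolynomial (Fin 4) ℚ := aeval rt (rt i)

/-- e₄(t) + e₄(ρt) + e₄(ρ²t) = 0 in ℚ[t₁,t₂,t₃,t₄]. -/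
theorem e4_sum_zero :
    (X 0 * X 1 * X 2 * X 3 : MvPolynomial (Fin 4) ℚ)
      + rt 0 * rt 1 * rt 2 * rt 3
      + r2t 0 * r2t 1 * r2t 2 * r2t 3 = 0 := by
  have h0 : rt 0 = -gam + X 0 := rfl
  have h1 : rt 1 = -gam + X 1 := rfl
  have h2 : rt 2 = -gam + X 2 := rfl
  have h3 : rt 3 = gam - X 3 := rfl
  have hC : (C (1/2 : ℚ) : MvPolynomial (Fin 4) ℚ) * 2 = 1 := by
    rw [show (2 : MvPolynomial (Fin 4) ℚ) = C 2 from (map_ofNat C 2).symm, ← C_mul]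
    norm_num
  have hg2 : 2 * gam = X 0 + X 1 + X 2 + X 3 := by
    rw [gam]; linear_combination (X 0 + X 1 + X 2 + X 3) * hC
  have hg : aeval rt gam = - X 3 := by
    simp only [gam, map_mul, map_add, aeval_C, aeval_X, h0, h1, h2, h3,
      algebraMap_eq]
    linear_combination (- C (1/2 : ℚ) * (X 0 + X 1 + X 2 + X 3) - X 3) * hC
  have k0 : r2t 0 = X 3 - gam + X 0 := by
    simp only [r2t, h0, map_add, map_neg, hg, aeval_X]; ring
  have k1 : r2t 1 = X 3 - gam + X 1 := by
    simp only [r2t, h1, map_add, map_neg, hg, aeval_X]; ring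
  have k2 : r2t 2 = X 3 - gam + X 2 := by
    simp only [r2t, h2, map_add, map_neg, hg, aeval_X]; ring
  have k3 : r2t 3 = -gam := by
    simp only [r2t, h3, map_sub, hg, aeval_X]; ring
  rw [h0, h1, h2, h3, k0, k1, k2, k3]
  linear_combination X 3 * gam * (X 3 - gam) * hg2
end

section
/- For any field F, the sequence of elementary symmetric polynomials in the squares e₁(x₁²,…,xₙ²), e₂(x₁²,…,xₙ²), …, eₙ(x₁²,…,xₙ²) is a regular sequence in F[x₁,…,xₙ]. -/
/-!
Write `E k = e_k(x₁ ^ m, …, xₙ ^ m)` with `m > 0`. Killing the variable `x_t` sends `E k` to the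
same polynomial in the remaining `n - 1` variables, so by induction on `n` the sequence
`x_t, E 1, …, E (n - 1)` is regular. A regular sequence of homogeneous elements can be reordered
(the graded Krull intersection theorem `⋂ₖ ((a ^ k) + J) = J` for homogeneous `J` and `a` of
positive degree drives the exchange of two neighbours), so `E 1, …, E (n - 1), x_t` is regular too.
This gives every step but the last, and since each `x_t` is a non-zero-divisor modulo
`(E 1, …, E (n - 1))`, so is `E n = ∏ x_t ^ m`.
-/

/-- The ideal generated by the terms preceding the i-th one. -/
def prevSpan {R : Type*} [CommRing R] {n : ℕ} (a : Fin n → R) (i : Fin n) : Ideal R :=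
  Ideal.span (a '' {j | j < i})

/-- a₁, …, aₙ is a regular sequence: each aᵢ is not a zero divisor
in R/(a₁, …, a_{i-1}). -/
def IsRegSeq {R : Type*} [CommRing R] {n : ℕ} (a : Fin n → R) : Prop :=
  ∀ i : Fin n, ∀ x : R, a i * x ∈ prevSpan a i → x ∈ prevSpan a i

open Set

section RegularModulo

variable {A : Type*} [CommRing A]

def IsRegularMod (J : Ideal A) (a : A) : Prop :=
  ∀ x, a * x ∈ J → x ∈ J

theorem isRegularMod_one (J : Ideal A) : IsRegularMod J (1 : A) :=
  fun x hx => by rwa [one_mul] at hx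

namespace IsRegularMod

variable {J : Ideal A} {a b : A}

theorem mul (ha : IsRegularMod J a) (hb : IsRegularMod J b) : IsRegularMod J (a * b) :=
  fun x hx => hb x <| ha _ <| by rwa [← mul_assoc]

theorem pow (ha : IsRegularMod J a) (k : ℕ) : IsRegularMod J (a ^ k) := by
  induction k with
  | zero => simpa using isRegularMod_one J
  | succ k ih => simpa only [pow_succ] using ih.mul ha

theorem span_singleton_sup (ha : IsRegularMod J a) (hb : IsRegularMod (Ideal.span {a} ⊔ J) b) :
    IsRegularMod (Ideal.span {b} ⊔ J) a := by
  intro x hx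
  obtain ⟨c, j, hj, hcj⟩ := Ideal.mem_span_singleton_sup.1 hx
  obtain ⟨c', j', hj', rfl⟩ := Ideal.mem_span_singleton_sup.1 <|
    hb c <| Ideal.mem_span_singleton_sup.2 ⟨x, -j, J.neg_mem hj, by linear_combination -hcj⟩
  refine Ideal.mem_span_singleton_sup.2 ⟨c', x - c' * b, ha _ ?_, by ring⟩
  have : a * (x - c' * b) = j' * b + j := by linear_combination -hcj
  rw [this]
  exact J.add_mem (J.mul_mem_right _ hj') hj

end IsRegularMod

theorem isRegularMod_sup_ker_iff {B F : Type*} [CommRing B] [FunLike F A B] [RingHomClass F A B]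
    {f : F} (hf : Function.Surjective f) (I : Ideal A) (a : A) :
    IsRegularMod (RingHom.ker f ⊔ I) a ↔ IsRegularMod (I.map f) (f a) := by
  have hmem : ∀ x, x ∈ RingHom.ker f ⊔ I ↔ f x ∈ I.map f := fun x => by
    rw [← Ideal.mem_comap, Ideal.comap_map_of_surjective f hf, sup_comm, RingHom.ker_eq_comap_bot]
  constructor
  · intro h y hy
    obtain ⟨x, rfl⟩ := hf y
    rw [← map_mul, ← hmem] at hy
    exact (hmem x).1 (h x hy)
  · intro h x hx
    rw [hmem, map_mul] at hx
    exact (hmem x).2 (h _ hx)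

theorem prevSpan_comp_val {n : ℕ} (b : ℕ → A) (i : Fin n) :
    prevSpan (fun k : Fin n => b k) i = Ideal.span (b '' Iio i) := by
  rw [prevSpan, ← Fin.image_val_Iio, image_image]
  rfl

section Graded

variable {ι : Type*} [SetLike ι A] [AddSubgroupClass ι A] {𝒜 : ℕ → ι} [GradedRing 𝒜]
  {J : Ideal A} {a b : A} {d : ℕ}

open DirectSum in
theorem Ideal.IsHomogeneous.mem_of_forall_mem_span_pow_sup (hJ : J.IsHomogeneous 𝒜)
    (ha : a ∈ 𝒜 d) (hd : 0 < d) {g : A} (hg : ∀ k, g ∈ Ideal.span {a ^ k} ⊔ J) : g ∈ J := by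
  refine (hJ.mem_iff 𝒜).2 fun i => ?_
  obtain ⟨c, j, hj, rfl⟩ := Ideal.mem_span_singleton_sup.1 (hg (i + 1))
  have hdeg : ¬(i + 1) • d ≤ i := by rw [smul_eq_mul]; nlinarith
  rw [decompose_add, DirectSum.add_apply, AddMemClass.coe_add, mul_comm,
    coe_decompose_mul_of_left_mem_of_not_le 𝒜 (SetLike.pow_mem_graded _ ha) hdeg, zero_add]
  exact hJ i hj

theorem IsRegularMod.of_span_singleton_sup (hJ : J.IsHomogeneous 𝒜) (ha : a ∈ 𝒜 d) (hd : 0 < d)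
    (hJa : IsRegularMod J a) (hb : IsRegularMod (Ideal.span {a} ⊔ J) b) : IsRegularMod J b := by
  intro g hg
  have key : ∀ k, ∃ g', g - a ^ k * g' ∈ J ∧ b * g' ∈ J := by
    intro k
    induction k with
    | zero => exact ⟨g, by simp, hg⟩
    | succ k ih =>
      obtain ⟨g', hg', hbg'⟩ := ih
      obtain ⟨c, j, hj, rfl⟩ := Ideal.mem_span_singleton_sup.1 (hb g' (Ideal.mem_sup_right hbg'))
      refine ⟨c, ?_, hJa _ ?_⟩
      · have : g - a ^ (k + 1) * c = (g - a ^ k * (c * a + j)) + a ^ k * j := by ring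
        rw [this]
        exact J.add_mem hg' (J.mul_mem_left _ hj)
      · have : a * (b * c) = b * (c * a + j) - b * j := by ring
        rw [this]
        exact J.sub_mem hbg' (J.mul_mem_left _ hj)
  refine hJ.mem_of_forall_mem_span_pow_sup ha hd fun k => ?_
  obtain ⟨g', hg', -⟩ := key k
  exact Ideal.mem_span_singleton_sup.2 ⟨g', _, hg', by ring⟩

theorem isRegularMod_rotate (ha : a ∈ 𝒜 d) (hd : 0 < d) {b : ℕ → A}
    (hb : ∀ k, SetLike.IsHomogeneousElem 𝒜 (b k)) (r : ℕ) (ha₀ : IsRegularMod ⊥ a)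
    (hab : ∀ k < r, IsRegularMod (Ideal.span (insert a (b '' Iio k))) (b k)) :
    (∀ k < r, IsRegularMod (Ideal.span (b '' Iio k)) (b k)) ∧
      IsRegularMod (Ideal.span (b '' Iio r)) a := by
  induction r with
  | zero => simpa using ha₀
  | succ r ih =>
    obtain ⟨hb', ha'⟩ := ih fun k hk => hab k (by omega)
    have hJ : (Ideal.span (b '' Iio r)).IsHomogeneous 𝒜 :=
      Ideal.homogeneous_span 𝒜 _ (by rintro _ ⟨k, -, rfl⟩; exact hb k)
    have hbr := hab r (lt_add_one r)
    rw [Ideal.span_insert] at hbr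
    have hIio : b '' Iio (r + 1) = insert (b r) (b '' Iio r) := by
      rw [← Order.succ_eq_add_one, Iio_succ_eq_Iic, ← Iio_insert, image_insert_eq]
    refine ⟨fun k hk => ?_, ?_⟩
    · rcases (Nat.lt_succ_iff_lt_or_eq.1 hk) with hk | rfl
      · exact hb' k hk
      · exact ha'.of_span_singleton_sup hJ ha hd hbr
    · rw [hIio, Ideal.span_insert]
      exact ha'.span_singleton_sup hbr

end Graded

end RegularModulo

theorem Multiset.esymm_zero_cons {R : Type*} [CommSemiring R] (s : Multiset R) (k : ℕ) :
    (0 ::ₘ s).esymm k = s.esymm k := by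
  cases k with
  | zero => simp [Multiset.esymm]
  | succ k => simp [Multiset.esymm, Multiset.powersetCard_cons]

namespace MvPolynomial

theorem ker_killCompl {R σ τ : Type*} [CommSemiring R] {f : σ → τ} (hf : Function.Injective f) :
    RingHom.ker (killCompl (R := R) hf) = Ideal.span (X '' (range f)ᶜ) := by
  ext p
  rw [RingHom.mem_ker, mem_ideal_span_X_image]
  constructor
  · intro hp m hm
    by_contra! h
    have hsupp : ↑m.support ⊆ range f := fun i hi =>
      by_contra fun hi' => Finsupp.mem_support_iff.1 hi (h i hi')
    have := coeff_killCompl hf (p := p) (s := m.comapDomain f hf.injOn)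
    rw [Finsupp.mapDomain_comapDomain f hf m hsupp, hp, coeff_zero] at this
    exact mem_support_iff.1 hm this.symm
  · intro h
    ext s
    rw [coeff_killCompl, coeff_zero]
    by_contra hs
    obtain ⟨i, hi, hsi⟩ := h _ (mem_support_iff.2 hs)
    exact hsi (Finsupp.mapDomain_of_notMem_range _ _ hi)

theorem isRegularMod_bot_X {R σ : Type*} [CommRing R] (i : σ) :
    IsRegularMod (⊥ : Ideal (MvPolynomial σ R)) (X i) := fun x hx => by
  rw [Ideal.mem_bot] at hx ⊢
  exact X_mul_cancel_left_iff.1 (hx.trans (mul_zero _).symm)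

theorem isHomogeneous_esymm (σ R : Type*) [CommSemiring R] [Fintype σ] (k : ℕ) :
    (esymm σ R k).IsHomogeneous k := by
  refine IsHomogeneous.sum _ _ _ fun t ht => ?_
  simpa [(Finset.mem_powersetCard.1 ht).2] using
    IsHomogeneous.prod t (fun i => X i) (fun _ => 1) fun i _ => isHomogeneous_X R i

noncomputable def esymmPow (σ R : Type*) [CommSemiring R] [Fintype σ] (m k : ℕ) :
    MvPolynomial σ R :=
  aeval (fun i => X i ^ m) (esymm σ R k)

section esymmPow

variable {σ R : Type*} [CommSemiring R] [Fintype σ] (m : ℕ)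

theorem isHomogeneous_esymmPow (k : ℕ) : (esymmPow σ R m k).IsHomogeneous (m * k) :=
  (isHomogeneous_esymm σ R k).aeval _ fun i => isHomogeneous_X_pow i m

theorem esymmPow_card : esymmPow σ R m (Fintype.card σ) = ∏ i, X i ^ m := by
  rw [esymmPow, esymm, ← Finset.card_univ, Finset.powersetCard_self, Finset.sum_singleton,
    map_prod]
  simp only [aeval_X]

theorem killCompl_esymmPow (hm : m ≠ 0) {n : ℕ} (t : Fin (n + 1)) (k : ℕ) :
    killCompl (R := R) (Fin.succAbove_right_injective (p := t)) (esymmPow (Fin (n + 1)) R m k) =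
      esymmPow (Fin n) R m k := by
  rw [esymmPow, esymmPow, ← AlgHom.comp_apply, comp_aeval, aeval_esymm_eq_multiset_esymm,
    aeval_esymm_eq_multiset_esymm, Fin.univ_succAbove n t]
  set kill := killCompl (R := R) (Fin.succAbove_right_injective (p := t))
  have hX : ∀ j, kill (X (t.succAbove j)) = X j := fun j => by
    rw [← rename_X, killCompl_rename_app]
  have hXt : kill (X t) = 0 := by simp [kill, killCompl]
  simp only [Finset.cons_val, Finset.map_val, Multiset.map_cons, Multiset.map_map,
    Function.comp_def, Fin.coe_succAboveEmb, map_pow, hX, hXt, zero_pow hm,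
    Multiset.esymm_zero_cons]

end esymmPow

section Regular

attribute [local instance] gradedAlgebra

theorem isRegularMod_esymmPow (R : Type*) [CommRing R] {m : ℕ} (hm : m ≠ 0) (n : ℕ) {k : ℕ}
    (hk : k < n) :
    IsRegularMod (Ideal.span ((fun j => esymmPow (Fin n) R m (j + 1)) '' Iio k))
      (esymmPow (Fin n) R m (k + 1)) := by
  induction n generalizing k with
  | zero => exact absurd hk (Nat.not_lt_zero k)
  | succ n ih =>
    set E := fun j => esymmPow (Fin (n + 1)) R m (j + 1)
    have hrot : ∀ t : Fin (n + 1), (∀ k < n, IsRegularMod (Ideal.span (E '' Iio k)) (E k)) ∧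
        IsRegularMod (Ideal.span (E '' Iio n)) (X t) := by
      intro t
      refine isRegularMod_rotate ((mem_homogeneousSubmodule _ _).2 (isHomogeneous_X R t)) one_pos
        (fun j => ⟨_, (mem_homogeneousSubmodule _ _).2 (isHomogeneous_esymmPow m (j + 1))⟩) n
        (isRegularMod_bot_X t) fun k hk => ?_
      have hker : RingHom.ker (killCompl (R := R) (Fin.succAbove_right_injective (p := t))) =
          Ideal.span {X t} := by
        rw [ker_killCompl, Fin.range_succAbove, compl_compl, image_singleton]
      rw [Ideal.span_insert, ← hker, isRegularMod_sup_ker_iff, Ideal.map_span, image_image]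
      · simpa only [E, killCompl_esymmPow m hm] using ih hk
      · exact fun p => ⟨rename _ p, killCompl_rename_app _ p⟩
    rcases Nat.lt_succ_iff_lt_or_eq.1 hk with hk | rfl
    · exact (hrot 0).1 k hk
    · have hlast : esymmPow (Fin (k + 1)) R m (k + 1) = ∏ t, X t ^ m := by
        simpa using esymmPow_card (σ := Fin (k + 1)) (R := R) m
      rw [hlast]
      exact Finset.prod_induction _ _ (fun _ _ => IsRegularMod.mul) (isRegularMod_one _)
        fun t _ => (hrot t).2.pow m

theorem isRegSeq_esymmPow (R : Type*) [CommRing R] {m : ℕ} (hm : m ≠ 0) (n : ℕ) :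
    IsRegSeq fun k : Fin n => esymmPow (Fin n) R m (k + 1) := fun i => by
  rw [prevSpan_comp_val fun j => esymmPow (Fin n) R m (j + 1)]
  exact isRegularMod_esymmPow R hm n i.isLt

end Regular

end MvPolynomial

/-- The elementary symmetric polynomials in the squares
e₁(x₁², …, xₙ²), …, eₙ(x₁², …, xₙ²) form a regular sequence in F[x₁, …, xₙ]. -/
theorem esymm_sq_regular (F : Type*) [Field F] (n : ℕ) :
    IsRegSeq (fun k : Fin n =>
      MvPolynomial.aeval (fun i : Fin n => (MvPolynomial.X i : MvPolynomial (Fin n) F) ^ 2)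
        (MvPolynomial.esymm (Fin n) F ((k : ℕ) + 1))) :=
  MvPolynomial.isRegSeq_esymmPow F two_ne_zero n
end

section
/- The rings ℤ[τ₁,τ₂,τ₃,τ₄,γ₁,γ₂,γ₃,γ₄,ω]/(Q₁,Q₂,Q₃,Q₄,q₂,q₄,q₆,q₈,q₁₂) and ℤ[τ₁,τ₂,τ₃,τ₄,γ₁,γ₃,ω]/(r̄₁,r̄₂,r̄₃,r̄₄,r̄₆,r̄₈,r̄₁₂) are isomorphic as rings, where Qᵢ = eᵢ(τ) - 2γᵢ (i=1,2,3), Q₄ = e₄(τ) - 2γ₄ - ω, q₂ = γ₂ - γ₁², q₄ = γ₄ - 2γ₁γ₃ + γ₂² - ω, q₆ = 2γ₂γ₄ - γ₃² + γ₂ω, q₈ = γ₄² + γ₄ω + ω², q₁₂ = ω³, and r̄₁ = 2γ₁ - e₁(τ), r̄₂ = 2γ₁² - e₂(τ), r̄₃ = 2γ₃ - e₃(τ), r̄₄ = e₄(τ) - 2γ₁e₃(τ) + 2γ₁⁴ - 3ω, r̄₆ = -γ₁²e₄(τ) + γ₃², r̄₈ = 3e₄(τ)γ₁⁴ - γ₁⁸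 + 3ω(ω + e₃(τ)γ₁), r̄₁₂ = ω³. -/
open MvPolynomial

/-- A = ℤ[τ₁,…,τ₄,γ₁,γ₂,γ₃,γ₄,ω]: variables 0–3 are τ₁,…,τ₄,
4–7 are γ₁,…,γ₄, 8 is ω. -/
noncomputable abbrev A9 := MvPolynomial (Fin 9) ℤ

noncomputable def Ae1τ : A9 := X 0 + X 1 + X 2 + X 3
noncomputable def Ae2τ : A9 :=
  X 0 * X 1 + X 0 * X 2 + X 0 * X 3 + X 1 * X 2 + X 1 * X 3 + X 2 * X 3
noncomputable def Ae3τ : A9 :=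
  X 0 * X 1 * X 2 + X 0 * X 1 * X 3 + X 0 * X 2 * X 3 + X 1 * X 2 * X 3
noncomputable def Ae4τ : A9 := X 0 * X 1 * X 2 * X 3

noncomputable def IA : Ideal A9 := Ideal.span
  { Ae1τ - 2 * X 4,                            -- Q₁
    Ae2τ - 2 * X 5,                            -- Q₂
    Ae3τ - 2 * X 6,                            -- Q₃
    Ae4τ - 2 * X 7 - X 8,                      -- Q₄
    X 5 - X 4 ^ 2,                             -- q₂
    X 7 - 2 * X 4 * X 6 + X 5 ^ 2 - X 8,       -- q₄
    2 * X 5 * X 7 - X 6 ^ 2 + X 5 * X 8,       -- q₆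
    X 7 ^ 2 + X 7 * X 8 + X 8 ^ 2,             -- q₈
    X 8 ^ 3 }                                  -- q₁₂

/-- B = ℤ[τ₁,…,τ₄,γ₁,γ₃,ω]: variables 0–3 are τ₁,…,τ₄, 4 is γ₁,
5 is γ₃, 6 is ω. -/
noncomputable abbrev B7 := MvPolynomial (Fin 7) ℤ

noncomputable def Be1τ : B7 := X 0 + X 1 + X 2 + X 3
noncomputable def Be2τ : B7 :=
  X 0 * X 1 + X 0 * X 2 + X 0 * X 3 + X 1 * X 2 + X 1 * X 3 + X 2 * X 3
noncomputable def Be3τ : B7 :=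
  X 0 * X 1 * X 2 + X 0 * X 1 * X 3 + X 0 * X 2 * X 3 + X 1 * X 2 * X 3
noncomputable def Be4τ : B7 := X 0 * X 1 * X 2 * X 3

noncomputable def JB : Ideal B7 := Ideal.span
  { 2 * X 4 - Be1τ,                                        -- r̄₁
    2 * X 4 ^ 2 - Be2τ,                                     -- r̄₂
    2 * X 5 - Be3τ,                                         -- r̄₃
    Be4τ - 2 * X 4 * Be3τ + 2 * X 4 ^ 4 - 3 * X 6,          -- r̄₄
    -(X 4 ^ 2 * Be4τ) + X 5 ^ 2,                            -- r̄₆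
    3 * Be4τ * X 4 ^ 4 - X 4 ^ 8 + 3 * X 6 * (X 6 + Be3τ * X 4),  -- r̄₈
    X 6 ^ 3 }                                               -- r̄₁₂

/-! Solving q₂ and q₄ for γ₂ = γ₁² and γ₄ = 2γ₁γ₃ - γ₁⁴ + ω eliminates two generators of the
first ring. After this substitution every Qᵢ, qⱼ is an explicit combination of the r̄'s and every
r̄ⱼ one of the Qᵢ, qⱼ, so the substitution and the inclusion of the remaining generators induce
mutually inverse homomorphisms between the two quotients. -/

namespace MvPolynomial

variable {R σ ι T : Type*} [CommRing R] [CommRing T] [Algebra R T]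

noncomputable def quotientLift (I : Ideal (MvPolynomial σ R)) (x : σ → T)
    (hx : I ≤ RingHom.ker (aeval x)) : MvPolynomial σ R ⧸ I →ₐ[R] T :=
  Ideal.Quotient.liftₐ I (aeval x) fun _ hp => RingHom.mem_ker.1 (hx hp)

@[simp]
theorem quotientLift_mk_X {I : Ideal (MvPolynomial σ R)} {x : σ → T}
    (hx : I ≤ RingHom.ker (aeval x)) (i : σ) :
    quotientLift I x hx (Ideal.Quotient.mk I (X i)) = x i :=
  aeval_X x i

theorem aeval_mk_X_eq_zero {I : Ideal (MvPolynomial σ R)} {p : MvPolynomial σ R} (hp : p ∈ I) :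
    aeval (fun i => Ideal.Quotient.mk I (X i)) p = 0 := by
  have h := AlgHom.congr_fun (aeval_unique (Ideal.Quotient.mkₐ R I)) p
  simp only [Ideal.Quotient.mkₐ_eq_mk, Ideal.Quotient.eq_zero_iff_mem.2 hp] at h
  exact h.symm

theorem quotient_algHom_ext {I : Ideal (MvPolynomial σ R)} {φ ψ : MvPolynomial σ R ⧸ I →ₐ[R] T}
    (h : ∀ i, φ (Ideal.Quotient.mk I (X i)) = ψ (Ideal.Quotient.mk I (X i))) : φ = ψ :=
  Ideal.Quotient.algHom_ext R (algHom_ext h)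

noncomputable def quotientAlgEquivOfInverse {I : Ideal (MvPolynomial σ R)}
    {J : Ideal (MvPolynomial ι R)} (x : σ → MvPolynomial ι R ⧸ J) (y : ι → MvPolynomial σ R ⧸ I)
    (hx : I ≤ RingHom.ker (aeval x)) (hy : J ≤ RingHom.ker (aeval y))
    (hyx : ∀ i, quotientLift J y hy (x i) = Ideal.Quotient.mk I (X i))
    (hxy : ∀ j, quotientLift I x hx (y j) = Ideal.Quotient.mk J (X j)) :
    (MvPolynomial σ R ⧸ I) ≃ₐ[R] (MvPolynomial ι R ⧸ J) :=
  AlgEquiv.ofAlgHom (quotientLift I x hx) (quotientLift J y hy)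
    (quotient_algHom_ext fun j => by simpa using hxy j)
    (quotient_algHom_ext fun i => by simpa using hyx i)

end MvPolynomial

noncomputable def genA (i : Fin 9) : A9 ⧸ IA := Ideal.Quotient.mk IA (X i)

noncomputable def genB (i : Fin 7) : B7 ⧸ JB := Ideal.Quotient.mk JB (X i)

noncomputable def imageInB : Fin 9 → B7 ⧸ JB :=
  ![genB 0, genB 1, genB 2, genB 3, genB 4, genB 4 ^ 2, genB 5,
    2 * genB 4 * genB 5 - genB 4 ^ 4 + genB 6, genB 6]

noncomputable def imageInA : Fin 7 → A9 ⧸ IA :=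
  ![genA 0, genA 1, genA 2, genA 3, genA 4, genA 6, genA 8]

theorem genA_five_eq : genA 5 = genA 4 ^ 2 := by
  have q₂ : aeval genA (X 5 - X 4 ^ 2 : A9) = 0 :=
    aeval_mk_X_eq_zero (I := IA) (Ideal.subset_span (by simp))
  simpa [sub_eq_zero] using q₂

theorem genA_seven_eq : genA 7 = 2 * genA 4 * genA 6 - genA 4 ^ 4 + genA 8 := by
  have q₄ : aeval genA (X 7 - 2 * X 4 * X 6 + X 5 ^ 2 - X 8 : A9) = 0 :=
    aeval_mk_X_eq_zero (I := IA) (Ideal.subset_span (by simp))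
  simp only [map_sub, map_add, map_mul, map_pow, map_ofNat, aeval_X] at q₄
  linear_combination q₄ - (genA 5 + genA 4 ^ 2) * genA_five_eq

theorem IA_le_ker_aeval_imageInB : IA ≤ RingHom.ker (aeval imageInB) := by
  have hJ : ∀ p ∈ _, aeval genB p = 0 := fun p hp =>
    aeval_mk_X_eq_zero (I := JB) (Ideal.subset_span hp)
  simp only [Set.forall_mem_insert, Set.mem_singleton_iff, forall_eq, Be1τ, Be2τ, Be3τ, Be4τ,
    map_add, map_sub, map_mul, map_pow, map_neg, map_ofNat, aeval_X] at hJ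
  obtain ⟨r₁, r₂, r₃, r₄, r₆, r₈, r₁₂⟩ := hJ
  rw [IA, Ideal.span_le]
  rintro p (rfl | rfl | rfl | rfl | rfl | rfl | rfl | rfl | rfl) <;>
    simp only [SetLike.mem_coe, RingHom.mem_ker, Ae1τ, Ae2τ, Ae3τ, Ae4τ, map_add, map_sub,
      map_mul, map_pow, map_ofNat, aeval_X, imageInB, Matrix.cons_val]
  · linear_combination -r₁
  · linear_combination -r₂
  · linear_combination -r₃
  · linear_combination -2 * genB 4 * r₃ + r₄
  · ring
  · ring
  · linear_combination -r₆ - genB 4 ^ 2 * r₄ + 2 * genB 4 ^ 3 * r₃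
  · linear_combination 4 * genB 4 ^ 2 * r₆ + (3 * genB 4 * genB 6 - 2 * genB 4 ^ 5) * r₃
      + genB 4 ^ 4 * r₄ + r₈
  · linear_combination r₁₂

theorem JB_le_ker_aeval_imageInA : JB ≤ RingHom.ker (aeval imageInA) := by
  have hI : ∀ p ∈ _, aeval genA p = 0 := fun p hp =>
    aeval_mk_X_eq_zero (I := IA) (Ideal.subset_span hp)
  simp only [Set.forall_mem_insert, Set.mem_singleton_iff, forall_eq, Ae1τ, Ae2τ, Ae3τ, Ae4τ,
    map_add, map_sub, map_mul, map_pow, map_ofNat, aeval_X, genA_five_eq, genA_seven_eq] at hI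
  obtain ⟨Q₁, Q₂, Q₃, Q₄, -, -, q₆, q₈, q₁₂⟩ := hI
  rw [JB, Ideal.span_le]
  rintro p (rfl | rfl | rfl | rfl | rfl | rfl | rfl) <;>
    simp only [SetLike.mem_coe, RingHom.mem_ker, Be1τ, Be2τ, Be3τ, Be4τ, map_add, map_sub,
      map_mul, map_pow, map_neg, map_ofNat, aeval_X, imageInA, Matrix.cons_val]
  · linear_combination -Q₁
  · linear_combination -Q₂
  · linear_combination -Q₃
  · linear_combination Q₄ - 2 * genA 4 * Q₃
  · linear_combination -genA 4 ^ 2 * Q₄ - q₆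
  · linear_combination 3 * genA 4 ^ 4 * Q₄ + 3 * genA 4 * genA 8 * Q₃ + q₈ + 4 * genA 4 ^ 2 * q₆
  · linear_combination q₁₂

/-- The two presentations give isomorphic rings. -/
theorem quotients_isomorphic : Nonempty ((A9 ⧸ IA) ≃+* (B7 ⧸ JB)) := by
  refine ⟨(quotientAlgEquivOfInverse imageInB imageInA IA_le_ker_aeval_imageInB
    JB_le_ker_aeval_imageInA (fun i => show _ = genA i from ?_)
    (fun j => show _ = genB j from ?_)).toRingEquiv⟩
  · fin_cases i <;> simp [imageInB, imageInA, genB, genA_five_eq, genA_seven_eq, map_ofNat]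
  · fin_cases j <;> simp [imageInB, imageInA, genA]
end

section
/- If a₁, …, aₙ is a regular sequence in a commutative ring R, then a₁^{v₁}, …, aₙ^{vₙ} is a regular sequence for any positive integers v₁, …, vₙ. -/
namespace RegPowAux

variable {R : Type*} [CommRing R] {n : ℕ}

/-- The ideal generated by the terms before `i`, omitting the `k`-th one. -/
def midSpan (a : Fin n → R) (k i : Fin n) : Ideal R :=
  Ideal.span (a '' {j | j < i ∧ j ≠ k})

lemma midSpan_self (a : Fin n → R) (i : Fin n) : midSpan a i i = prevSpan a i := by
  unfold midSpan prevSpan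
  congr 1
  ext x
  simp only [Set.mem_image, Set.mem_setOf_eq]
  constructor
  · rintro ⟨j, hj, rfl⟩; exact ⟨j, hj.1, rfl⟩
  · rintro ⟨j, hj, rfl⟩; exact ⟨j, ⟨hj, hj.ne⟩, rfl⟩

lemma prevSpan_eq_midSpan_sup (a : Fin n → R) {k i : Fin n} (hk : k < i) :
    prevSpan a i = midSpan a k i ⊔ Ideal.span {a k} := by
  have hset : {j : Fin n | j < i} = {j : Fin n | j < i ∧ j ≠ k} ∪ {k} := by
    ext j
    simp only [Set.mem_setOf_eq, Set.mem_union, Set.mem_singleton_iff]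
    constructor
    · intro hj
      rcases eq_or_ne j k with rfl | hne
      · exact Or.inr rfl
      · exact Or.inl ⟨hj, hne⟩
    · rintro (⟨hj, _⟩ | rfl)
      · exact hj
      · exact hk
  unfold midSpan prevSpan
  rw [hset, Set.image_union, Set.image_singleton, Ideal.span_union]

lemma midSpan_le_prevSpan (a : Fin n → R) (k i : Fin n) :
    midSpan a k i ≤ prevSpan a i :=
  Ideal.span_mono (Set.image_mono fun _ hj => hj.1)

lemma midSpan_mono (a : Fin n → R) (k : Fin n) {p i : Fin n} (hpi : p ≤ i) :
    midSpan a k p ≤ midSpan a k i :=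
  Ideal.span_mono (Set.image_mono fun _ hj => ⟨lt_of_lt_of_le hj.1 hpi, hj.2⟩)

lemma mem_midSpan_of (a : Fin n → R) {k i j : Fin n} (h1 : j < i) (h2 : j ≠ k) :
    a j ∈ midSpan a k i :=
  Ideal.subset_span ⟨j, ⟨h1, h2⟩, rfl⟩

/-- Key lemma: `a k` is "regular" modulo the other elements below `i`. -/
lemma regBAux (a : Fin n → R) (h : IsRegSeq a) (N : ℕ) :
    ∀ i : Fin n, i.val ≤ N → ∀ k : Fin n, k ≤ i → ∀ z : R,
      a k * z ∈ midSpan a k i → z ∈ midSpan a k i := by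
  induction N with
  | zero =>
    intro i hiN k hki z hz
    have hik : k = i := le_antisymm hki (by
      have : i.val = 0 := Nat.le_zero.mp hiN
      simp [Fin.le_def, this])
    subst hik
    rw [midSpan_self] at hz ⊢
    exact h k z hz
  | succ N ih =>
  intro i hiN k hki z hz
  rcases eq_or_lt_of_le hki with rfl | hklt
  · rw [midSpan_self] at hz ⊢
    exact h k z hz
  -- k < i, so i.val ≥ 1; let p be the predecessor of i
  have hkival : k.val < i.val := hklt
  have hi1 : 1 ≤ i.val := by omega
  set p : Fin n := ⟨i.val - 1, by omega⟩ with hp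
  have hpv : p.val = i.val - 1 := rfl
  have hpi : p < i := by simp only [Fin.lt_def, hp]; omega
  have hkp : k ≤ p := by simp only [Fin.le_def, hp]; omega
  rcases eq_or_lt_of_le hkp with hkpeq | hkplt
  · -- k = p : midSpan a k i = prevSpan a k
    have hkv : k.val = i.val - 1 := congrArg Fin.val hkpeq
    have hms : midSpan a k i = prevSpan a k := by
      unfold midSpan prevSpan
      congr 1
      ext x
      simp only [Set.mem_image, Set.mem_setOf_eq]
      constructor
      · rintro ⟨j, ⟨hj1, hj2⟩, rfl⟩
        refine ⟨j, ?_, rfl⟩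
        have hjk : j.val ≠ k.val := fun hc => hj2 (Fin.ext hc)
        simp only [Fin.lt_def] at hj1 ⊢
        omega
      · rintro ⟨j, hj, rfl⟩
        refine ⟨j, ⟨?_, hj.ne⟩, rfl⟩
        have hjv := Fin.lt_def.mp hj
        simp only [Fin.lt_def]
        omega
    rw [hms] at hz ⊢
    exact h k z hz
  -- k < p < i
  have hkpval : k.val < p.val := hkplt
  have hpk : p ≠ k := fun hc => absurd (congrArg Fin.val hc) (by omega)
  have hstep : midSpan a k i = midSpan a k p ⊔ Ideal.span {a p} := by
    have hset : {j : Fin n | j < i ∧ j ≠ k} = {j : Fin n | j < p ∧ j ≠ k} ∪ {p} := by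
      ext j
      simp only [Set.mem_setOf_eq, Set.mem_union, Set.mem_singleton_iff]
      constructor
      · rintro ⟨hj1, hj2⟩
        rcases eq_or_ne j p with rfl | hne
        · exact Or.inr rfl
        · refine Or.inl ⟨?_, hj2⟩
          have hjp : j.val ≠ p.val := fun hc => hne (Fin.ext hc)
          simp only [Fin.lt_def] at hj1 ⊢
          omega
      · rintro (⟨hj1, hj2⟩ | rfl)
        · exact ⟨lt_trans hj1 hpi, hj2⟩
        · exact ⟨hpi, hpk⟩
    unfold midSpan
    rw [hset, Set.image_union, Set.image_singleton, Ideal.span_union]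
  rw [hstep] at hz
  rcases Submodule.mem_sup.mp hz with ⟨y, hy, e, he, heq⟩
  rcases Ideal.mem_span_singleton'.mp he with ⟨t, rfl⟩
  -- a p * t = a k * z - y ∈ prevSpan a p, so t ∈ prevSpan a p
  have hapt : a p * t ∈ prevSpan a p := by
    have h1 : a k * z ∈ prevSpan a p :=
      Ideal.mul_mem_right z _ (Ideal.subset_span ⟨k, hkplt, rfl⟩)
    have h2 : y ∈ prevSpan a p := midSpan_le_prevSpan a k p hy
    have heq2 : a p * t = a k * z - y := by rw [← heq]; ring
    rw [heq2]
    exact Ideal.sub_mem _ h1 h2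
  have ht : t ∈ prevSpan a p := h p t hapt
  rw [prevSpan_eq_midSpan_sup a hkplt] at ht
  rcases Submodule.mem_sup.mp ht with ⟨w, hw, e', he', heq'⟩
  rcases Ideal.mem_span_singleton'.mp he' with ⟨s, rfl⟩
  -- a k * (z - s * a p) = y + a p * w ∈ midSpan a k p
  have hkey : a k * (z - s * a p) ∈ midSpan a k p := by
    have heq3 : a k * (z - s * a p) = y + a p * w := by
      linear_combination -heq - a p * heq'
    rw [heq3]
    exact Ideal.add_mem _ hy (Ideal.mul_mem_left _ _ hw)
  have hz' : z - s * a p ∈ midSpan a k p := ih p (by simp only [hp]; omega) k hkp (z - s * a p) hkey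
  have : z = (z - s * a p) + s * a p := by ring
  rw [this]
  exact Ideal.add_mem _ (midSpan_mono a k hpi.le hz')
    (Ideal.mul_mem_left _ _ (mem_midSpan_of a hpi hpk))

lemma regB (a : Fin n → R) (h : IsRegSeq a) (i : Fin n) (k : Fin n) (hki : k ≤ i)
    (z : R) (hz : a k * z ∈ midSpan a k i) : z ∈ midSpan a k i :=
  regBAux a h i.val i le_rfl k hki z hz

/-- Powers version of the key lemma. -/
lemma regC (a : Fin n → R) (h : IsRegSeq a) {i k : Fin n} (hki : k ≤ i) (t : ℕ) :
    ∀ z : R, a k ^ t * z ∈ midSpan a k i → z ∈ midSpan a k i := by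
  induction t with
  | zero => intro z hz; simpa using hz
  | succ t ihp =>
    intro z hz
    have : a k ^ (t + 1) * z = a k ^ t * (a k * z) := by ring
    rw [this] at hz
    exact regB a h i k hki z (ihp (a k * z) hz)

/-- `a i` stays regular when `a k` (k < i) is replaced by a power in the prior ideal. -/
lemma regE (a : Fin n → R) (h : IsRegSeq a) {i k : Fin n} (hki : k < i) (t : ℕ) :
    ∀ z : R, a i * z ∈ midSpan a k i ⊔ Ideal.span {a k ^ t} →
      z ∈ midSpan a k i ⊔ Ideal.span {a k ^ t} := by
  induction t with
  | zero =>
    intro z _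
    have : (1 : R) ∈ Ideal.span {a k ^ 0} := by
      simpa using Ideal.mem_span_singleton_self (1 : R)
    have htop : Ideal.span {a k ^ 0} = ⊤ := by
      simpa using Ideal.span_singleton_one (α := R)
    rw [htop]
    simp
  | succ t ihp =>
    intro z hz
    have hle : Ideal.span ({a k ^ (t+1)} : Set R) ≤ Ideal.span {a k ^ t} := by
      rw [Ideal.span_singleton_le_span_singleton]
      exact ⟨a k, by ring⟩
    have hz0 : a i * z ∈ midSpan a k i ⊔ Ideal.span {a k ^ t} :=
      (sup_le_sup_left hle (midSpan a k i)) hz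
    have hz' : z ∈ midSpan a k i ⊔ Ideal.span {a k ^ t} := ihp z hz0
    rcases Submodule.mem_sup.mp hz' with ⟨w, hw, e, he, heqz⟩
    rcases Ideal.mem_span_singleton'.mp he with ⟨u, rfl⟩
    rcases Submodule.mem_sup.mp hz with ⟨y, hy, e', he', heqa⟩
    rcases Ideal.mem_span_singleton'.mp he' with ⟨r, rfl⟩
    -- a k ^ t * (u * a i - r * a k) = y - a i * w ∈ midSpan a k i
    have hkey : a k ^ t * (u * a i - r * a k) ∈ midSpan a k i := by
      have heq3 : a k ^ t * (u * a i - r * a k) = y - a i * w := by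
        linear_combination a i * heqz - heqa
      rw [heq3]
      exact Ideal.sub_mem _ hy (Ideal.mul_mem_left _ _ hw)
    have hur : u * a i - r * a k ∈ midSpan a k i := regC a h hki.le t _ hkey
    -- hence a i * u ∈ prevSpan a i, so u ∈ prevSpan a i
    have hau : a i * u ∈ prevSpan a i := by
      have h1 : u * a i - r * a k ∈ prevSpan a i := midSpan_le_prevSpan a k i hur
      have h2 : r * a k ∈ prevSpan a i :=
        Ideal.mul_mem_left _ _ (Ideal.subset_span ⟨k, hki, rfl⟩)
      have : a i * u = (u * a i - r * a k) + r * a k := by ring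
      rw [this]
      exact Ideal.add_mem _ h1 h2
    have hu : u ∈ prevSpan a i := h i u hau
    rw [prevSpan_eq_midSpan_sup a hki] at hu
    rcases Submodule.mem_sup.mp hu with ⟨w', hw', e'', he'', hequ⟩
    rcases Ideal.mem_span_singleton'.mp he'' with ⟨s, rfl⟩
    -- z = (w + w' * a k ^ t) + s * a k ^ (t+1)
    have hzfin : z = (w + w' * a k ^ t) + s * a k ^ (t + 1) := by
      linear_combination -heqz - a k ^ t * hequ
    rw [hzfin]
    refine Ideal.add_mem _ (Submodule.mem_sup_left ?_) (Submodule.mem_sup_right ?_)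
    · exact Ideal.add_mem _ hw (Ideal.mul_mem_right _ _ hw')
    · exact Ideal.mem_span_singleton'.mpr ⟨s, rfl⟩

/-- Replacing one entry of a regular sequence by a power of itself
preserves regularity. -/
lemma regD (b : Fin n → R) (h : IsRegSeq b) (k : Fin n) (t : ℕ) :
    IsRegSeq (Function.update b k (b k ^ t)) := by
  set c := Function.update b k (b k ^ t) with hc
  have hcoff : ∀ j : Fin n, j ≠ k → c j = b j := fun j hj =>
    Function.update_of_ne hj _ _
  have hck : c k = b k ^ t := Function.update_self _ _ _
  -- midSpan of c and b agree (with hole at k)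
  have hmid : ∀ i, midSpan c k i = midSpan b k i := by
    intro i
    unfold midSpan
    congr 1
    apply Set.image_congr
    rintro j ⟨_, hjk⟩
    exact hcoff j hjk
  intro i z hz
  rcases lt_trichotomy i k with hik | rfl | hki
  · -- i < k : everything below i is untouched
    have hprev : prevSpan c i = prevSpan b i := by
      unfold prevSpan
      congr 1
      apply Set.image_congr
      intro j hj
      exact hcoff j (ne_of_lt (lt_trans hj hik))
    rw [hprev] at hz ⊢
    rw [hcoff i (ne_of_lt hik)] at hz
    exact h i z hz
  · -- i = k
    have hprev : prevSpan c i = prevSpan b i := by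
      unfold prevSpan
      congr 1
      apply Set.image_congr
      intro j hj
      exact hcoff j (ne_of_lt hj)
    rw [hprev] at hz ⊢
    rw [hck] at hz
    -- b k ^ t * z ∈ prevSpan b k → z ∈ prevSpan b k, via regC with i = k
    rw [← midSpan_self] at hz ⊢
    exact regC b h (le_refl i) t z hz
  · -- k < i
    have hprev : prevSpan c i = midSpan b k i ⊔ Ideal.span {b k ^ t} := by
      rw [prevSpan_eq_midSpan_sup c hki, hmid, hck]
    rw [hprev] at hz ⊢
    rw [hcoff i (ne_of_gt hki)] at hz
    exact regE b h hki t z hz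

end RegPowAux

open RegPowAux in
/-- Powers of a regular sequence form a regular sequence. -/
theorem regseq_pow {R : Type*} [CommRing R] {n : ℕ} (a : Fin n → R)
    (h : IsRegSeq a) (v : Fin n → ℕ) (hv : ∀ i, 0 < v i) :
    IsRegSeq (fun i => a i ^ v i) := by
  -- raise the entries to powers one at a time
  have key : ∀ m : ℕ, IsRegSeq (fun i : Fin n => if i.val < m then a i ^ v i else a i) := by
    intro m
    induction m with
    | zero => simpa using h
    | succ m ihm =>
      by_cases hm : m < n
      · set k : Fin n := ⟨m, hm⟩ with hk
        have heq : (fun i : Fin n => if i.val < m + 1 then a i ^ v i else a i) =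
            Function.update (fun i : Fin n => if i.val < m then a i ^ v i else a i) k
              ((fun i : Fin n => if i.val < m then a i ^ v i else a i) k ^ v k) := by
          funext i
          rcases eq_or_ne i k with rfl | hik
          · simp [Function.update_self, hk]
          · have : i.val ≠ m := fun hc => hik (Fin.ext (by simp [hk, hc]))
            rw [Function.update_of_ne hik]
            by_cases h1 : i.val < m
            · have h2 : i.val < m + 1 := by omega
              simp [h1, h2]
            · have h2 : ¬ i.val < m + 1 := by omega
              simp [h1, h2]
        rw [heq]
        exact regD _ ihm k (v k)
      · have heq : (fun i : Fin n => if i.val < m + 1 then a i ^ v i else a i) =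
            (fun i : Fin n => if i.val < m then a i ^ v i else a i) := by
          funext i
          have hi := i.isLt
          simp [show i.val < m + 1 by omega, show i.val < m by omega]
        rw [heq]
        exact ihm
  have := key n
  have heq : (fun i : Fin n => if i.val < n then a i ^ v i else a i) =
      (fun i : Fin n => a i ^ v i) := by
    funext i
    simp [i.isLt]
  rwa [heq] at this
end
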